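/- The space Ĩ with the order topology induced by <_XY is not separable: every dense subset of Ĩ is uncountable. -/

import Mathlib

/-- The set of intuitionistic fuzzy values Ĩ = {⟨μ,ν⟩ ∈ [0,1]² : μ + ν ≤ 1}. -/
def IFV : Set (ℝ × ℝ) :=
  {p | 0 ≤ p.1 ∧ p.1 ≤ 1 ∧ 0 ≤ p.2 ∧ p.2 ≤ 1 ∧ p.1 + p.2 ≤ 1}

/-- Score function s(α) = μ_α − ν_α. -/
def sc (p : ℝ × ℝ) : ℝ := p.1 - p.2

/-- Accuracy function h(α) = μ_α + ν_α. -/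
def ac (p : ℝ × ℝ) : ℝ := p.1 + p.2

/-- Strict Xu–Yager order. -/
def ltXY (a b : ℝ × ℝ) : Prop := sc a < sc b ∨ (sc a = sc b ∧ ac a < ac b)

/-- Nonstrict Xu–Yager order. -/
def leXY (a b : ℝ × ℝ) : Prop := sc a < sc b ∨ (sc a = sc b ∧ ac a ≤ ac b)

/-- The space of IFVs as a type. -/
def IFVt : Type := {p : ℝ × ℝ // p ∈ IFV}

/-- The linear order on IFVs given by the Xu–Yager order
(lexicographic in (score, accuracy)). -/
noncomputable instance : LinearOrder IFVt :=
  LinearOrder.lift' (fun x : IFVt => toLex (sc x.1, ac x.1)) (by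
    intro x y hxy
    have h1 : sc x.1 = sc y.1 := congrArg (fun z => (ofLex z).1) hxy
    have h2 : ac x.1 = ac y.1 := congrArg (fun z => (ofLex z).2) hxy
    simp only [sc, ac] at h1 h2
    have e1 : x.1.1 = y.1.1 := by linarith
    have e2 : x.1.2 = y.1.2 := by linarith
    exact Subtype.ext (Prod.ext e1 e2))

/-- The order topology on IFVs induced by the linear order <_XY. -/
noncomputable instance : TopologicalSpace IFVt := Preorder.topology IFVt

instance : OrderTopology IFVt := ⟨rfl⟩


lemma ifv_lt_iff (x y : IFVt) :
    x < y ↔ (sc x.1 < sc y.1 ∨ (sc x.1 = sc y.1 ∧ ac x.1 < ac y.1)) := by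
  have h : x < y ↔ (toLex (sc x.1, ac x.1) : Lex (ℝ × ℝ)) < toLex (sc y.1, ac y.1) := Iff.rfl
  rw [h, Prod.Lex.lt_iff]
  exact Iff.rfl

/-- Ĩ with the order topology induced by <_XY is not separable: every dense
subset is uncountable. -/
theorem ifv_not_separable :
    ∀ D : Set IFVt, Dense D → ¬ D.Countable := by
  intro D hD hC
  have key : ∀ s : ℝ, ∃ d : IFVt, s ∈ Set.Ioo (0:ℝ) 1 → d ∈ D ∧ sc d.1 = s := by
    intro s
    by_cases hs : s ∈ Set.Ioo (0:ℝ) 1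
    · obtain ⟨hs0, hs1⟩ := hs
      have hA : ((s, (0:ℝ)) : ℝ × ℝ) ∈ IFV := by
        simp only [IFV, Set.mem_setOf_eq]
        refine ⟨by linarith, by linarith, by linarith, by linarith, by linarith⟩
      have hB : (((s+1)/2, (1-s)/2) : ℝ × ℝ) ∈ IFV := by
        simp only [IFV, Set.mem_setOf_eq]
        refine ⟨by linarith, by linarith, by linarith, by linarith, by linarith⟩
      have hM : (((3*s+1)/4, (1-s)/4) : ℝ × ℝ) ∈ IFV := by
        simp only [IFV, Set.mem_setOf_eq]
        refine ⟨by linarith, by linarith, by linarith, by linarith, by linarith⟩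
      set A : IFVt := ⟨(s, 0), hA⟩
      set B : IFVt := ⟨((s+1)/2, (1-s)/2), hB⟩
      set M : IFVt := ⟨((3*s+1)/4, (1-s)/4), hM⟩
      have hAM : A < M := by
        rw [ifv_lt_iff]
        right
        constructor
        · show s - 0 = (3*s+1)/4 - (1-s)/4; ring
        · show s + 0 < (3*s+1)/4 + (1-s)/4; linarith
      have hMB : M < B := by
        rw [ifv_lt_iff]
        right
        constructor
        · show (3*s+1)/4 - (1-s)/4 = (s+1)/2 - (1-s)/2; ring
        · show (3*s+1)/4 + (1-s)/4 < (s+1)/2 + (1-s)/2; linarith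
      have hne : (Set.Ioo A B).Nonempty := ⟨M, hAM, hMB⟩
      obtain ⟨d, hdD, hdO⟩ := hD.exists_mem_open isOpen_Ioo hne
      refine ⟨d, fun _ => ⟨hdD, ?_⟩⟩
      have h1 := (ifv_lt_iff A d).mp hdO.1
      have h2 := (ifv_lt_iff d B).mp hdO.2
      have e1 : sc A.1 = s := by show s - 0 = s; ring
      have e2 : sc B.1 = s := by show (s+1)/2 - (1-s)/2 = s; ring
      rw [e1] at h1
      rw [e2] at h2
      rcases h1 with h1 | h1
      · rcases h2 with h2 | h2
        · linarith
        · exact h2.1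
      · exact h1.1.symm
    · exact ⟨⟨(0, 0), by simp [IFV]⟩, fun h => absurd h hs⟩
  choose f hf using key
  have hinj : Set.InjOn f (Set.Ioo (0:ℝ) 1) := by
    intro a ha b hb hab
    rw [← (hf a ha).2, ← (hf b hb).2, hab]
  have hIoo : (Set.Ioo (0:ℝ) 1).Countable := by
    have hmt : Set.MapsTo f (Set.Ioo (0:ℝ) 1) D := fun a ha => (hf a ha).1
    exact hmt.countable_of_injOn hinj hC
  have := hIoo.measure_zero MeasureTheory.volume
  rw [Real.volume_Ioo] at this
  norm_num at this
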